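/- Let ν be a Borel probability measure supported in (0,1]^d and r > 0. Suppose for some s > 0 and all sufficiently large n, max_{Q ∈ D_n} ν(Q) ≤ 2^{−sn}. Then the lower quantization dimension satisfies D̲_r(ν) ≤ r·d̲/(r + s − d̲) whenever d̲/(r+s) < 1, where d̲ := liminf_n log(card{Q ∈ D_n : ν(Q) > 0})/log(2^n) is the lower Minkowski dimension of supp(ν). -/

import Mathlib

open MeasureTheory Filter

/-- The half-open dyadic cube of generation `n` indexed by `k ∈ ℤ^d`. -/
def dyadicCube (d n : ℕ) (k : Fin d → ℤ) : Set (EuclideanSpace ℝ (Fin d)) :=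
  {x | ∀ i, (k i : ℝ) * 2 ^ (-(n : ℤ)) < x i ∧ x i ≤ ((k i : ℝ) + 1) * 2 ^ (-(n : ℤ))}

/-- `Σ_{C ∈ D_n} ν(C)^q`, with the convention `0^0 = 0` (cubes of measure zero
are discarded). -/
noncomputable def lqSum {d : ℕ} (ν : Measure (EuclideanSpace ℝ (Fin d)))
    (n : ℕ) (q : ℝ) : ℝ :=
  ∑' k : Fin d → ℤ,
    if ν (dyadicCube d n k) = 0 then 0 else (ν (dyadicCube d n k)).toReal ^ q

/-- The `n`-th approximation `β_{ν,n}(q) = log (Σ_{C ∈ D_n} ν(C)^q) / log 2^n`. -/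
noncomputable def lqSpectrumN {d : ℕ} (ν : Measure (EuclideanSpace ℝ (Fin d)))
    (n : ℕ) (q : ℝ) : ℝ :=
  Real.log (lqSum ν n q) / (n * Real.log 2)

/-- The `L^q`-spectrum `β_ν(q) = limsup_n β_{ν,n}(q)`. -/
noncomputable def lqSpectrum {d : ℕ} (ν : Measure (EuclideanSpace ℝ (Fin d)))
    (q : ℝ) : ℝ :=
  Filter.limsup (fun n : ℕ => lqSpectrumN ν n q) Filter.atTop

open Metric in
/-- The `n`-th quantization error of order `r`. -/
noncomputable def quantError {d : ℕ} (ν : Measure (EuclideanSpace ℝ (Fin d)))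
    (n : ℕ) (r : ℝ) : ℝ :=
  sInf ((fun α : Finset (EuclideanSpace ℝ (Fin d)) =>
      (∫ x, infDist x (α : Set (EuclideanSpace ℝ (Fin d))) ^ r ∂ν) ^ (1 / r)) ''
    {α : Finset (EuclideanSpace ℝ (Fin d)) | α.Nonempty ∧ α.card ≤ n})

/-- The upper quantization dimension `D̄_r(ν) = limsup_n log n / (- log e_{n,r}(ν))`. -/
noncomputable def upperQDim {d : ℕ} (ν : Measure (EuclideanSpace ℝ (Fin d)))
    (r : ℝ) : ℝ :=
  Filter.limsup (fun n : ℕ => Real.log n / (- Real.log (quantError ν n r))) Filter.atTop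

/-- The lower quantization dimension `D̲_r(ν) = liminf_n log n / (- log e_{n,r}(ν))`. -/
noncomputable def lowerQDim {d : ℕ} (ν : Measure (EuclideanSpace ℝ (Fin d)))
    (r : ℝ) : ℝ :=
  Filter.liminf (fun n : ℕ => Real.log n / (- Real.log (quantError ν n r))) Filter.atTop

open Metric

lemma dyadic_ineq_iff {n : ℕ} (y : ℝ) (m : ℤ) :
    ((m:ℝ) * 2 ^ (-(n:ℤ)) < y ∧ y ≤ ((m:ℝ)+1) * 2 ^ (-(n:ℤ)))
      ↔ ((m:ℝ) < y * 2 ^ n ∧ y * 2 ^ n ≤ (m:ℝ) + 1) := by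
  have h2 : (0:ℝ) < 2 ^ n := by positivity
  have e1 : (m:ℝ) * 2 ^ (-(n:ℤ)) = m / 2 ^ n := by
    rw [zpow_neg, zpow_natCast]; ring
  have e2 : ((m:ℝ)+1) * 2 ^ (-(n:ℤ)) = ((m:ℝ)+1) / 2 ^ n := by
    rw [zpow_neg, zpow_natCast]; ring
  rw [e1, e2, div_lt_iff₀ h2, le_div_iff₀ h2]

lemma mem_dyadicCube_iff {d n : ℕ} {k : Fin d → ℤ} {x : EuclideanSpace ℝ (Fin d)} :
    x ∈ dyadicCube d n k ↔ ∀ i, k i = ⌈x i * 2 ^ n⌉ - 1 := by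
  have key : ∀ i : Fin d, (((k i:ℝ) * 2 ^ (-(n:ℤ)) < x i ∧ x i ≤ ((k i:ℝ)+1) * 2 ^ (-(n:ℤ)))
      ↔ k i = ⌈x i * 2 ^ n⌉ - 1) := by
    intro i
    rw [dyadic_ineq_iff]
    constructor
    · rintro ⟨a, b⟩
      have : ⌈x i * 2 ^ n⌉ = k i + 1 := by
        rw [Int.ceil_eq_iff]
        constructor
        · push_cast; linarith
        · push_cast; linarith
      omega
    · intro h
      have h1 : (k i : ℝ) = (⌈x i * 2 ^ n⌉ : ℤ) - 1 := by exact_mod_cast h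
      have hle : x i * 2 ^ n ≤ (⌈x i * 2 ^ n⌉ : ℝ) := Int.le_ceil _
      have hlt : (⌈x i * 2 ^ n⌉ : ℝ) - 1 < x i * 2 ^ n := by
        have := Int.ceil_lt_add_one (x i * 2 ^ n)
        linarith
      constructor
      · push_cast [h1] at *; linarith
      · push_cast [h1] at *; linarith
  exact forall_congr' key

lemma measurableSet_dyadicCube (d n : ℕ) (k : Fin d → ℤ) :
    MeasurableSet (dyadicCube d n k) := by
  have h : dyadicCube d n k = ⋂ i, (fun x : EuclideanSpace ℝ (Fin d) => x i) ⁻¹'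
      (Set.Ioc ((k i : ℝ) * 2 ^ (-(n:ℤ))) (((k i : ℝ)+1) * 2 ^ (-(n:ℤ)))) := by
    ext x; simp [dyadicCube, Set.mem_Ioc]
  rw [h]
  exact MeasurableSet.iInter fun i =>
    measurableSet_Ioc.preimage ((measurable_pi_apply i).comp
      (WithLp.measurable_ofLp 2 (Fin d → ℝ)))

lemma pairwise_disjoint_dyadicCube (d n : ℕ) :
    Pairwise (Function.onFun Disjoint fun k : Fin d → ℤ => dyadicCube d n k) := by
  intro k k' hkk'
  simp only [Function.onFun, Set.disjoint_left]
  intro x hx hx'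
  exact hkk' (by
    funext i
    rw [mem_dyadicCube_iff] at hx hx'
    rw [hx i, hx' i])

lemma iUnion_dyadicCube (d n : ℕ) :
    (⋃ k : Fin d → ℤ, dyadicCube d n k) = Set.univ := by
  ext x
  simp only [Set.mem_iUnion, Set.mem_univ, iff_true]
  exact ⟨fun i => ⌈x i * 2 ^ n⌉ - 1, mem_dyadicCube_iff.mpr fun i => rfl⟩

lemma dyadicCube_subset_compl {d n : ℕ} {k : Fin d → ℤ} {i : Fin d}
    (h : k i < 0 ∨ (2:ℤ)^n ≤ k i) :
    dyadicCube d n k ⊆ {x : EuclideanSpace ℝ (Fin d) | ∀ i, x i ∈ Set.Ioc (0 : ℝ) 1}ᶜ := by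
  intro x hx
  simp only [Set.mem_compl_iff, Set.mem_setOf_eq, not_forall]
  refine ⟨i, ?_⟩
  obtain ⟨h1, h2⟩ := (dyadic_ineq_iff (x i) (k i)).mp (hx i)
  have h2n : (0:ℝ) < 2 ^ n := by positivity
  simp only [Set.mem_Ioc, not_and_or, not_lt, not_le]
  rcases h with h | h
  · left
    have : (k i : ℝ) + 1 ≤ 0 := by exact_mod_cast by omega
    nlinarith
  · right
    have : (2:ℝ)^n ≤ (k i : ℝ) := by exact_mod_cast h
    nlinarith

lemma charged_subset {d n : ℕ} (ν : Measure (EuclideanSpace ℝ (Fin d)))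
    (hsupp : ν ({x : EuclideanSpace ℝ (Fin d) | ∀ i, x i ∈ Set.Ioc (0 : ℝ) 1}ᶜ) = 0) :
    {k : Fin d → ℤ | ν (dyadicCube d n k) ≠ 0} ⊆
      ↑(Fintype.piFinset fun _ : Fin d => Finset.Ico (0:ℤ) (2^n)) := by
  intro k hk
  simp only [Finset.coe_sort_coe, Finset.mem_coe, Fintype.mem_piFinset, Finset.mem_Ico]
  intro i
  by_contra hcon
  push_neg at hcon
  rcases lt_or_ge (k i) 0 with h | h
  · exact hk (measure_mono_null (dyadicCube_subset_compl (Or.inl h)) hsupp)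
  · exact hk (measure_mono_null (dyadicCube_subset_compl (Or.inr (hcon h))) hsupp)

lemma box_card (d n : ℕ) :
    (Fintype.piFinset fun _ : Fin d => Finset.Ico (0:ℤ) (2^n)).card = 2^(n*d) := by
  rw [Fintype.card_piFinset]
  simp only [Int.card_Ico, sub_zero, Finset.prod_const, Finset.card_univ, Fintype.card_fin]
  rw [pow_mul]
  congr 1


section QE
variable {d : ℕ} (ν : Measure (EuclideanSpace ℝ (Fin d))) (r : ℝ)

lemma quantError_set_nonneg {n : ℕ} :
    ∀ y ∈ ((fun α : Finset (EuclideanSpace ℝ (Fin d)) =>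
      (∫ x, infDist x (α : Set (EuclideanSpace ℝ (Fin d))) ^ r ∂ν) ^ (1 / r)) ''
    {α : Finset (EuclideanSpace ℝ (Fin d)) | α.Nonempty ∧ α.card ≤ n}), 0 ≤ y := by
  rintro y ⟨α, -, rfl⟩
  exact Real.rpow_nonneg (integral_nonneg fun x => Real.rpow_nonneg infDist_nonneg r) _

lemma quantError_nonneg (n : ℕ) : 0 ≤ quantError ν n r :=
  Real.sInf_nonneg (quantError_set_nonneg ν r)

lemma quantError_le (n : ℕ) (α : Finset (EuclideanSpace ℝ (Fin d)))
    (hne : α.Nonempty) (hcard : α.card ≤ n) :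
    quantError ν n r ≤ (∫ x, infDist x (α : Set (EuclideanSpace ℝ (Fin d))) ^ r ∂ν) ^ (1 / r) :=
  csInf_le ⟨0, fun y hy => quantError_set_nonneg ν r y hy⟩ ⟨α, ⟨hne, hcard⟩, rfl⟩

lemma quantError_antitone {m n : ℕ} (hm : 1 ≤ m) (h : m ≤ n) :
    quantError ν n r ≤ quantError ν m r := by
  apply csInf_le_csInf ⟨0, fun y hy => quantError_set_nonneg ν r y hy⟩
  · exact ⟨_, ⟨{0}, ⟨Finset.singleton_nonempty 0, by simpa using hm⟩, rfl⟩⟩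
  · apply Set.image_mono
    intro α hα
    exact ⟨hα.1, hα.2.trans h⟩
end QE

section Main
variable {d : ℕ} (ν : Measure (EuclideanSpace ℝ (Fin d))) [IsProbabilityMeasure ν]

/-- The finset of charged generation-`n` cubes. -/
noncomputable def chargedFinset (n : ℕ) : Finset (Fin d → ℤ) :=
  (Fintype.piFinset fun _ : Fin d => Finset.Ico (0:ℤ) (2^n)).filter
    (fun k => ν (dyadicCube d n k) ≠ 0)

variable (hsupp : ν ({x : EuclideanSpace ℝ (Fin d) | ∀ i, x i ∈ Set.Ioc (0 : ℝ) 1}ᶜ) = 0)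

open scoped ENNReal NNReal

include hsupp

lemma coe_chargedFinset (n : ℕ) :
    (chargedFinset ν n : Set (Fin d → ℤ)) = {k : Fin d → ℤ | ν (dyadicCube d n k) ≠ 0} := by
  ext k
  simp only [chargedFinset, Finset.coe_filter, Set.mem_setOf_eq, Finset.mem_coe,
    and_iff_right_iff_imp]
  intro hk
  have := charged_subset ν hsupp (n := n) hk
  simpa using this

lemma ncard_charged (n : ℕ) :
    {k : Fin d → ℤ | ν (dyadicCube d n k) ≠ 0}.ncard = (chargedFinset ν n).card := by
  rw [← coe_chargedFinset ν hsupp, Set.ncard_coe_finset]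

lemma sum_charged (n : ℕ) :
    ∑ k ∈ chargedFinset ν n, ν (dyadicCube d n k) = 1 := by
  have h1 : ν (⋃ k : Fin d → ℤ, dyadicCube d n k) = 1 := by
    rw [iUnion_dyadicCube]; exact measure_univ
  rw [measure_iUnion (pairwise_disjoint_dyadicCube d n)
    (fun k => measurableSet_dyadicCube d n k)] at h1
  rw [← h1]
  exact (tsum_eq_sum (fun k hk => by
    by_contra hne
    exact hk (by
      have hbox := charged_subset ν hsupp (n := n) hne
      simp only [chargedFinset, Finset.mem_filter]
      exact ⟨by simpa using hbox, hne⟩))).symm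

lemma charged_nonempty (n : ℕ) : (chargedFinset ν (d := d) n).Nonempty := by
  by_contra h
  rw [Finset.not_nonempty_iff_eq_empty] at h
  have := sum_charged ν hsupp n
  rw [h] at this
  simp only [Finset.sum_empty] at this
  exact zero_ne_one this

lemma card_charged_le (n : ℕ) : (chargedFinset ν (d := d) n).card ≤ 2^(n*d) := by
  calc (chargedFinset ν (d := d) n).card
      ≤ (Fintype.piFinset fun _ : Fin d => Finset.Ico (0:ℤ) (2^n)).card :=
        Finset.card_le_card (Finset.filter_subset _ _)
    _ = 2^(n*d) := box_card d n

lemma one_le_card_mul {n : ℕ} {s : ℝ}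
    (hmax : ∀ k : Fin d → ℤ, (ν (dyadicCube d n k)).toReal ≤ (2 : ℝ) ^ (-(s * n))) :
    (1:ℝ) ≤ (chargedFinset ν (d := d) n).card * (2 : ℝ) ^ (-(s * n)) := by
  have h1 : ((1 : ℝ≥0∞)).toReal = ∑ k ∈ chargedFinset ν n, (ν (dyadicCube d n k)).toReal := by
    rw [← sum_charged ν hsupp n, ENNReal.toReal_sum fun k _ => measure_ne_top ν _]
  have h2 : ∑ k ∈ chargedFinset ν n, (ν (dyadicCube d n k)).toReal
      ≤ (chargedFinset ν (d := d) n).card * (2 : ℝ) ^ (-(s * n)) := by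
    rw [← nsmul_eq_mul]
    exact Finset.sum_le_card_nsmul _ _ _ fun k _ => hmax k
  simpa using h1.le.trans h2
end Main

section Main2
open scoped Classical
variable {d : ℕ} (ν : Measure (EuclideanSpace ℝ (Fin d))) [IsProbabilityMeasure ν]
variable (hsupp : ν ({x : EuclideanSpace ℝ (Fin d) | ∀ i, x i ∈ Set.Ioc (0 : ℝ) 1}ᶜ) = 0)

/-- The upper corner of a dyadic cube, as a point of `EuclideanSpace`. -/
noncomputable def corner (d n : ℕ) (k : Fin d → ℤ) : EuclideanSpace ℝ (Fin d) :=
  (EuclideanSpace.equiv (Fin d) ℝ).symm (fun i => ((k i : ℝ) + 1) * 2 ^ (-(n : ℤ)))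

lemma dist_corner_le {n : ℕ} {k : Fin d → ℤ} {x : EuclideanSpace ℝ (Fin d)}
    (hx : x ∈ dyadicCube d n k) :
    dist x (corner d n k) ≤ Real.sqrt d * 2 ^ (-(n:ℤ)) := by
  rw [EuclideanSpace.dist_eq]
  have hb : ∀ i, dist (x i) (corner d n k i) ^ 2 ≤ ((2:ℝ) ^ (-(n:ℤ)))^2 := by
    intro i
    obtain ⟨h1, h2⟩ := hx i
    have hc : corner d n k i = ((k i : ℝ) + 1) * 2 ^ (-(n:ℤ)) := rfl
    rw [Real.dist_eq, sq_abs]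
    have h2n : (0:ℝ) < 2 ^ (-(n:ℤ)) := by positivity
    nlinarith [h1, h2]
  calc Real.sqrt (∑ i, dist (x i) (corner d n k i) ^ 2)
      ≤ Real.sqrt (∑ _i : Fin d, ((2:ℝ) ^ (-(n:ℤ)))^2) :=
        Real.sqrt_le_sqrt (Finset.sum_le_sum fun i _ => hb i)
    _ = Real.sqrt d * 2 ^ (-(n:ℤ)) := by
        rw [Finset.sum_const, Finset.card_univ, Fintype.card_fin, nsmul_eq_mul,
          Real.sqrt_mul (by positivity), Real.sqrt_sq (by positivity)]

include hsupp in
lemma ae_infDist_le (n : ℕ) :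
    ∀ᵐ x ∂ν, infDist x ((chargedFinset ν n).image (corner d n) :
        Set (EuclideanSpace ℝ (Fin d))) ≤ Real.sqrt d * 2 ^ (-(n:ℤ)) := by
  have hnull : ν (⋃ k : {k : Fin d → ℤ // ν (dyadicCube d n k) = 0}, dyadicCube d n k) = 0 :=
    measure_iUnion_null fun k => k.2
  filter_upwards [measure_eq_zero_iff_ae_notMem.mp hnull] with x hx
  set k0 : Fin d → ℤ := fun i => ⌈x i * 2 ^ n⌉ - 1 with hk0
  have hxk : x ∈ dyadicCube d n k0 := mem_dyadicCube_iff.mpr fun i => rfl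
  have hch : ν (dyadicCube d n k0) ≠ 0 := by
    intro h0
    exact hx (Set.mem_iUnion.mpr ⟨⟨k0, h0⟩, hxk⟩)
  have hmem : corner d n k0 ∈ ((chargedFinset ν n).image (corner d n) :
      Set (EuclideanSpace ℝ (Fin d))) := by
    simp only [Finset.coe_image, Set.mem_image, Finset.mem_coe]
    refine ⟨k0, ?_, rfl⟩
    simp only [chargedFinset, Finset.mem_filter]
    exact ⟨by simpa using charged_subset ν hsupp (n := n) hch, hch⟩
  exact (infDist_le_dist_of_mem hmem).trans (dist_corner_le hxk)

include hsupp in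
lemma quantError_bound (n : ℕ) {r : ℝ} (hr : 0 < r) :
    quantError ν ((chargedFinset ν (d := d) n).card) r ≤ Real.sqrt d * 2 ^ (-(n:ℤ)) := by
  set α := (chargedFinset ν n).image (corner d n) with hα
  set Cst := Real.sqrt d * 2 ^ (-(n:ℤ)) with hCst
  have hCst0 : 0 ≤ Cst := by positivity
  have hint : (∫ x, infDist x (α : Set (EuclideanSpace ℝ (Fin d))) ^ r ∂ν) ≤ Cst ^ r := by
    have hb : ∀ᵐ x ∂ν, infDist x (α : Set (EuclideanSpace ℝ (Fin d))) ^ r ≤ Cst ^ r := by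
      filter_upwards [ae_infDist_le ν hsupp n] with x hx
      exact Real.rpow_le_rpow infDist_nonneg hx hr.le
    calc (∫ x, infDist x (α : Set (EuclideanSpace ℝ (Fin d))) ^ r ∂ν)
        ≤ ∫ _x, Cst ^ r ∂ν := by
          apply integral_mono_of_nonneg
          · exact Filter.Eventually.of_forall fun x => Real.rpow_nonneg infDist_nonneg r
          · exact integrable_const _
          · exact hb
      _ = Cst ^ r := by simp
  have hne : α.Nonempty := (charged_nonempty ν hsupp n).image _
  calc quantError ν ((chargedFinset ν (d := d) n).card) r
      ≤ (∫ x, infDist x (α : Set (EuclideanSpace ℝ (Fin d))) ^ r ∂ν) ^ (1 / r) :=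
        quantError_le ν r _ α hne Finset.card_image_le
    _ ≤ (Cst ^ r) ^ (1 / r) := by
        apply Real.rpow_le_rpow (integral_nonneg fun x => Real.rpow_nonneg infDist_nonneg r)
          hint (by positivity)
    _ = Cst := by
        rw [← Real.rpow_mul hCst0, mul_one_div, div_self hr.ne', Real.rpow_one]
end Main2


set_option maxHeartbeats 1000000 in
/-- Upper bound for the lower quantization dimension: if eventually every
generation-`n` dyadic cube has `ν(Q) ≤ 2^{-s n}`, and `d̲` denotes the lower
Minkowski dimension of the support (via counting charged dyadic cubes), then
`D̲_r(ν) ≤ r d̲ / (r + s - d̲)` provided `d̲ / (r + s) < 1`. -/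
theorem lowerQDim_upper_bound {d : ℕ} (ν : Measure (EuclideanSpace ℝ (Fin d)))
    [IsProbabilityMeasure ν]
    (hsupp : ν ({x : EuclideanSpace ℝ (Fin d) | ∀ i, x i ∈ Set.Ioc (0 : ℝ) 1}ᶜ) = 0)
    (r s : ℝ) (hr : 0 < r) (hs : 0 < s)
    (hmax : ∀ᶠ n : ℕ in Filter.atTop, ∀ k : Fin d → ℤ,
      (ν (dyadicCube d n k)).toReal ≤ (2 : ℝ) ^ (-(s * n)))
    (dl : ℝ)
    (hdl : dl = Filter.liminf (fun n : ℕ =>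
      Real.log (Set.ncard {k : Fin d → ℤ | ν (dyadicCube d n k) ≠ 0}) /
        (n * Real.log 2)) Filter.atTop)
    (hlt : dl / (r + s) < 1) :
    lowerQDim ν r ≤ r * dl / (r + s - dl) := by
  unfold lowerQDim
  classical
  set N : ℕ → ℕ := fun n => (chargedFinset ν n).card with hN
  set b : ℕ → ℝ := fun n => Real.log (N n) / (n * Real.log 2) with hb
  set a : ℕ → ℝ := fun m => Real.log m / (- Real.log (quantError ν m r)) with ha
  have hdlb : dl = Filter.liminf b Filter.atTop := by
    rw [hdl]
    congr 1
    funext n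
    rw [ncard_charged ν hsupp n]
  have hlog2 : (0:ℝ) < Real.log 2 := Real.log_pos (by norm_num)
  have hrs : 0 < r + s := by linarith
  have hdlrs : dl < r + s := by rwa [div_lt_one hrs] at hlt
  have hN1 : ∀ n, 1 ≤ N n := fun n => Finset.card_pos.mpr (charged_nonempty ν hsupp n)
  -- b is bounded above by d
  have hbled : ∀ n, b n ≤ d := by
    intro n
    rcases Nat.eq_zero_or_pos n with h | h
    · simp [hb, h]
    · have hNle : (N n : ℝ) ≤ (2:ℝ)^(n*d) := by
        exact_mod_cast Nat.cast_le.mpr (card_charged_le ν hsupp n)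
      have hlogN : Real.log (N n) ≤ (n*d) * Real.log 2 := by
        calc Real.log (N n) ≤ Real.log ((2:ℝ)^(n*d)) :=
              Real.log_le_log (by exact_mod_cast hN1 n) hNle
          _ = (n*d) * Real.log 2 := by rw [Real.log_pow]; push_cast; ring
      rw [hb]
      rw [div_le_iff₀ (by positivity)]
      calc Real.log (N n) ≤ (n*d) * Real.log 2 := hlogN
        _ = (d:ℝ) * ((n:ℝ) * Real.log 2) := by push_cast; ring
  have hcobdd : Filter.IsCoboundedUnder (· ≥ ·) Filter.atTop b :=
    isCoboundedUnder_ge_of_le _ hbled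
  -- F1: lower bounds on N n when hmax holds at n
  have hF1 : ∀ n : ℕ, (∀ k : Fin d → ℤ,
      (ν (dyadicCube d n k)).toReal ≤ (2 : ℝ) ^ (-(s * n))) →
      (2:ℝ)^(s*(n:ℝ)) ≤ N n := by
    intro n hkn
    have h1 : (1:ℝ) ≤ (N n : ℝ) * (2 : ℝ) ^ (-(s * n)) := one_le_card_mul ν hsupp hkn
    have hA : (0:ℝ) < (2:ℝ)^(s*(n:ℝ)) := Real.rpow_pos_of_pos (by norm_num) _
    rw [Real.rpow_neg (by norm_num), ← div_eq_mul_inv, le_div_iff₀ hA, one_mul] at h1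
    exact h1
  have hlogF1 : ∀ n : ℕ, (∀ k : Fin d → ℤ,
      (ν (dyadicCube d n k)).toReal ≤ (2 : ℝ) ^ (-(s * n))) →
      s * ((n:ℝ) * Real.log 2) ≤ Real.log (N n) := by
    intro n hkn
    have := Real.log_le_log (Real.rpow_pos_of_pos (by norm_num) _) (hF1 n hkn)
    rwa [Real.log_rpow (by norm_num), mul_assoc] at this
  -- s ≤ dl
  have hsdl : s ≤ dl := by
    rw [hdlb]
    apply Filter.le_liminf_of_le hcobdd
    filter_upwards [hmax, Filter.eventually_ge_atTop 1] with n hkn hn1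
    have hpos : (0:ℝ) < (n:ℝ) * Real.log 2 := by
      have : (1:ℝ) ≤ (n:ℝ) := by exact_mod_cast hn1
      positivity
    rw [hb, le_div_iff₀ hpos]
    calc s * ((n:ℝ) * Real.log 2) ≤ Real.log (N n) := hlogF1 n hkn
      _ = Real.log (N n) := rfl
  have hdl0 : 0 < dl := lt_of_lt_of_le hs hsdl
  -- a is eventually nonneg, hence bounded below
  have hbdd : Filter.IsBoundedUnder (· ≥ ·) Filter.atTop a := by
    obtain ⟨n1, hn1⟩ := pow_unbounded_of_one_lt (Real.sqrt d) (one_lt_two (α := ℝ))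
    have hsmall : Real.sqrt d * 2 ^ (-(n1:ℤ)) < 1 := by
      rw [zpow_neg, zpow_natCast]
      rw [mul_inv_lt_iff₀' (by positivity), mul_one]
      exact hn1
    refine ⟨0, ?_⟩
    simp only [Filter.eventually_map]
    filter_upwards [Filter.eventually_ge_atTop (max (N n1) 1)] with m hm
    have hm1 : 1 ≤ m := le_trans (le_max_right _ _) hm
    have hmN : N n1 ≤ m := le_trans (le_max_left _ _) hm
    have he_le : quantError ν m r ≤ Real.sqrt d * 2 ^ (-(n1:ℤ)) :=
      (quantError_antitone ν r (hN1 n1) hmN).trans (quantError_bound ν hsupp n1 hr)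
    have he0 : 0 ≤ quantError ν m r := quantError_nonneg ν r m
    have hlogm : 0 ≤ Real.log m := Real.log_natCast_nonneg m
    rcases eq_or_lt_of_le he0 with h | h
    · show 0 ≤ a m
      rw [ha]
      simp only [← h, Real.log_zero, neg_zero, div_zero, le_refl]
    · show 0 ≤ a m
      rw [ha]
      have : Real.log (quantError ν m r) < 0 := Real.log_neg h (he_le.trans_lt hsmall)
      exact div_nonneg hlogm (by linarith)
  -- main estimate: liminf a ≤ dl
  have hmain : Filter.liminf a Filter.atTop ≤ dl := by
    apply le_of_forall_sub_le
    intro ε hε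
    rw [sub_le_iff_le_add]
    apply Filter.liminf_le_of_frequently_le _ hbdd
    rw [Filter.frequently_atTop]
    intro M
    -- frequently b n < dl + ε/2
    have hfreq : ∃ᶠ n in Filter.atTop, b n < dl + ε/2 := by
      apply Filter.frequently_lt_of_liminf_lt hcobdd
      rw [← hdlb]; linarith
    -- eventual good conditions
    have htend : Filter.Tendsto (fun n : ℕ => (n:ℝ) * Real.log 2) Filter.atTop Filter.atTop :=
      (tendsto_natCast_atTop_atTop).atTop_mul_const hlog2
    have h2s : Filter.Tendsto (fun n : ℕ => (2:ℝ)^(s*(n:ℝ))) Filter.atTop Filter.atTop := by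
      have heq : ∀ n : ℕ, (2:ℝ)^(s*(n:ℝ)) = ((2:ℝ)^s)^n := by
        intro n
        rw [← Real.rpow_natCast ((2:ℝ)^s) n, ← Real.rpow_mul (by norm_num)]
      simp only [heq]
      exact tendsto_pow_atTop_atTop_of_one_lt
        (Real.one_lt_rpow_iff_of_pos (by norm_num) |>.mpr (Or.inl ⟨by norm_num, hs⟩))
    have hQ : ∀ᶠ n in Filter.atTop,
        (∀ k : Fin d → ℤ, (ν (dyadicCube d n k)).toReal ≤ (2 : ℝ) ^ (-(s * n))) ∧
        1 ≤ n ∧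
        Real.log (Real.sqrt d) < (n:ℝ) * Real.log 2 ∧
        (dl + ε) * Real.log (Real.sqrt d) * (2/ε) ≤ (n:ℝ) * Real.log 2 ∧
        (M:ℝ) ≤ (2:ℝ)^(s*(n:ℝ)) := by
      filter_upwards [hmax, Filter.eventually_ge_atTop 1,
        htend.eventually_gt_atTop (Real.log (Real.sqrt d)),
        htend.eventually_ge_atTop ((dl + ε) * Real.log (Real.sqrt d) * (2/ε)),
        h2s.eventually_ge_atTop (M:ℝ)] with n h1 h2 h3 h4 h5
      exact ⟨h1, h2, h3, h4, h5⟩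
    obtain ⟨n, hP, hkn, hn1, hD, hQ4, hM⟩ := (hfreq.and_eventually hQ).exists
    refine ⟨N n, ?_, ?_⟩
    · -- N n ≥ M
      have : (M:ℝ) ≤ (N n : ℝ) := hM.trans (hF1 n hkn)
      exact_mod_cast this
    · -- a (N n) ≤ dl + ε
      show a (N n) ≤ dl + ε
      have he_le : quantError ν (N n) r ≤ Real.sqrt d * 2 ^ (-(n:ℤ)) :=
        quantError_bound ν hsupp n hr
      have he0 : 0 ≤ quantError ν (N n) r := quantError_nonneg ν r (N n)
      have hnpos : (0:ℝ) < (n:ℝ) * Real.log 2 := by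
        have : (1:ℝ) ≤ (n:ℝ) := by exact_mod_cast hn1
        positivity
      have hlogm : 0 ≤ Real.log (N n) := Real.log_natCast_nonneg _
      have hlogm2 : Real.log (N n) < (dl + ε/2) * ((n:ℝ) * Real.log 2) := by
        have := hP
        rw [hb, div_lt_iff₀ hnpos] at this
        exact this
      rcases eq_or_lt_of_le he0 with h | h
      · rw [ha]
        simp only [← h, Real.log_zero, neg_zero, div_zero]
        linarith
      · have hsd : 0 < Real.sqrt d * 2 ^ (-(n:ℤ)) := lt_of_lt_of_le h he_le
        have hsd0 : (0:ℝ) < Real.sqrt d := by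
          by_contra hc
          push_neg at hc
          nlinarith [zpow_pos (show (0:ℝ) < 2 by norm_num) (-(n:ℤ))]
        have hloge : Real.log (quantError ν (N n) r) ≤
            Real.log (Real.sqrt d) - (n:ℝ) * Real.log 2 := by
          calc Real.log (quantError ν (N n) r)
              ≤ Real.log (Real.sqrt d * 2 ^ (-(n:ℤ))) := Real.log_le_log h he_le
            _ = Real.log (Real.sqrt d) - (n:ℝ) * Real.log 2 := by
                rw [Real.log_mul hsd0.ne' (by positivity), Real.log_zpow]
                push_cast
                ring
        have hDn : 0 < (n:ℝ) * Real.log 2 - Real.log (Real.sqrt d) := by linarith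
        have hneg : (n:ℝ) * Real.log 2 - Real.log (Real.sqrt d)
            ≤ - Real.log (quantError ν (N n) r) := by linarith
        rw [ha]
        calc Real.log (N n) / (- Real.log (quantError ν (N n) r))
            ≤ Real.log (N n) / ((n:ℝ) * Real.log 2 - Real.log (Real.sqrt d)) :=
              div_le_div_of_nonneg_left hlogm hDn hneg |>.trans le_rfl
              |>.trans (le_refl _) |>.trans_eq rfl
          _ ≤ dl + ε := by
              rw [div_le_iff₀ hDn]
              have h5 : (dl + ε) * Real.log (Real.sqrt d) ≤ (ε/2) * ((n:ℝ) * Real.log 2) := by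
                have hmul := mul_le_mul_of_nonneg_right hQ4
                  (by positivity : (0:ℝ) ≤ ε/2)
                have hid : (dl + ε) * Real.log (Real.sqrt d) * (2/ε) * (ε/2)
                    = (dl + ε) * Real.log (Real.sqrt d) := by
                  field_simp
                nlinarith [hmul]
              nlinarith [h5, hlogm2]
  -- conclude
  have hfin : dl ≤ r * dl / (r + s - dl) := by
    rw [le_div_iff₀ (by linarith)]
    nlinarith [mul_nonneg hdl0.le (sub_nonneg.mpr hsdl)]
  exact hmain.trans hfin
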